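/- For j ≥ 2, the expression (1/3)^j · [1 1 0] · M^{j-2} · [1 0 1]^T, where M is the 3×3 matrix with rows (1,1,0), (1,1,1), (1,1,0), equals (1/3)^j · ((1+√2)^{j-1} + (1-√2)^{j-1})/2. -/
import Mathlib

open Matrix Real in
private lemma key6 (n : ℕ) :
    ![1, 1, 0] ⬝ᵥ ((!![1, 1, 0; 1, 1, 1; 1, 1, 0] : Matrix (Fin 3) (Fin 3) ℝ) ^ n).mulVec
        ![1, 0, 1]
      = ((1 + Real.sqrt 2) ^ (n + 1) + (1 - Real.sqrt 2) ^ (n + 1)) / 2 := by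
  set M : Matrix (Fin 3) (Fin 3) ℝ := !![1, 1, 0; 1, 1, 1; 1, 1, 0] with hM
  have hs : Real.sqrt 2 ^ 2 = 2 := Real.sq_sqrt (by norm_num)
  have hMv : M.mulVec ![1, 0, 1] = ![1, 2, 1] := by
    funext i; fin_cases i <;>
      norm_num [hM, Matrix.mulVec, dotProduct, Fin.sum_univ_succ]
  have hMv2 : M.mulVec ![1, 2, 1] = ![3, 4, 3] := by
    funext i; fin_cases i <;>
      norm_num [hM, Matrix.mulVec, dotProduct, Fin.sum_univ_succ]
  have hcomb : ((2:ℝ) • ![(1:ℝ), 2, 1] + ![1, 0, 1]) = ![3, 4, 3] := by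
    funext i; fin_cases i <;> norm_num
  induction n using Nat.twoStepInduction with
  | zero =>
    simp [Matrix.mulVec, dotProduct, Fin.sum_univ_succ]
  | one =>
    simp [hM, Matrix.mulVec, dotProduct, Fin.sum_univ_succ]
    nlinarith [hs]
  | more n ih2 ih1 =>
    have hrec : (M ^ (n + 2)).mulVec ![1, 0, 1]
        = (2:ℝ) • (M ^ (n + 1)).mulVec ![1, 0, 1] + (M ^ n).mulVec ![1, 0, 1] := by
      have h1 : M ^ (n + 2) = M ^ n * (M * M) := by rw [pow_add, pow_two]
      have h2 : M ^ (n + 1) = M ^ n * M := by rw [pow_add, pow_one]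
      calc (M ^ (n + 2)).mulVec ![1, 0, 1]
          = (M ^ n).mulVec ![3, 4, 3] := by
            rw [h1, ← Matrix.mulVec_mulVec, ← Matrix.mulVec_mulVec, hMv, hMv2]
        _ = (M ^ n).mulVec ((2:ℝ) • ![(1:ℝ), 2, 1] + ![1, 0, 1]) := by rw [hcomb]
        _ = (2:ℝ) • (M ^ n).mulVec ![1, 2, 1] + (M ^ n).mulVec ![1, 0, 1] := by
            rw [Matrix.mulVec_add, Matrix.mulVec_smul]
        _ = (2:ℝ) • (M ^ (n + 1)).mulVec ![1, 0, 1] + (M ^ n).mulVec ![1, 0, 1] := by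
            rw [h2, ← Matrix.mulVec_mulVec, hMv]
    rw [hrec, dotProduct_add, dotProduct_smul, ih1, ih2]
    have e1 : (1 + Real.sqrt 2) ^ (n + 2 + 1)
        = 2 * (1 + Real.sqrt 2) ^ (n + 1 + 1) + (1 + Real.sqrt 2) ^ (n + 1) := by
      have h0 : (1 + Real.sqrt 2) ^ (n + 2 + 1)
          = (1 + Real.sqrt 2) ^ (n + 1) * (1 + Real.sqrt 2) ^ 2 := by ring
      have h2 : (1 + Real.sqrt 2) ^ 2 = 3 + 2 * Real.sqrt 2 := by nlinarith [hs]
      have h3 : (1 + Real.sqrt 2) ^ (n + 1 + 1)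
          = (1 + Real.sqrt 2) ^ (n + 1) * (1 + Real.sqrt 2) := by ring
      rw [h0, h2, h3]; ring
    have e2 : (1 - Real.sqrt 2) ^ (n + 2 + 1)
        = 2 * (1 - Real.sqrt 2) ^ (n + 1 + 1) + (1 - Real.sqrt 2) ^ (n + 1) := by
      have h0 : (1 - Real.sqrt 2) ^ (n + 2 + 1)
          = (1 - Real.sqrt 2) ^ (n + 1) * (1 - Real.sqrt 2) ^ 2 := by ring
      have h2 : (1 - Real.sqrt 2) ^ 2 = 3 - 2 * Real.sqrt 2 := by nlinarith [hs]
      have h3 : (1 - Real.sqrt 2) ^ (n + 1 + 1)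
          = (1 - Real.sqrt 2) ^ (n + 1) * (1 - Real.sqrt 2) := by ring
      rw [h0, h2, h3]; ring
    rw [e1, e2]
    simp only [smul_eq_mul]
    ring

open Matrix in
/-- For j ≥ 2, (1/3)^j [1 1 0] M^(j-2) [1 0 1]ᵀ = (1/3)^j ((1+√2)^(j-1)+(1-√2)^(j-1))/2,
where M = [[1,1,0],[1,1,1],[1,1,0]]. -/
theorem stmt6 (j : ℕ) (hj : 2 ≤ j) :
    (1 / 3 : ℝ) ^ j *
      (![1, 1, 0] ⬝ᵥ ((!![1, 1, 0; 1, 1, 1; 1, 1, 0] : Matrix (Fin 3) (Fin 3) ℝ) ^ (j - 2)).mulVec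
        ![1, 0, 1])
      = (1 / 3 : ℝ) ^ j * ((1 + Real.sqrt 2) ^ (j - 1) + (1 - Real.sqrt 2) ^ (j - 1)) / 2 := by
  obtain ⟨n, rfl⟩ : ∃ n, j = n + 2 := ⟨j - 2, by omega⟩
  have h1 : n + 2 - 2 = n := by omega
  have h2 : n + 2 - 1 = n + 1 := by omega
  rw [h1, h2, key6 n]
  ring
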